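/- arXiv:1611.04031 — 4 statements merged into one kernel-verified Lean document; each statement's English description precedes it below -/
import Mathlib

section
/- Let p be an odd prime and n ≥ 1. A function f : F_p^n → F_p^n is planar (i.e., for every nonzero a ∈ F_p^n the map x ↦ f(x+a) − f(x) is a bijection of F_p^n) if and only if for every nonzero c ∈ F_p^n the component function f_c(x) = c·f(x) is bent, i.e., |W_{f_c}(u)|^2 = p^n for every u ∈ F_p^n. -/
open Finset

noncomputable section

/-! Writing `e(t) = ε_p^t`, the identity `|W_{f_c}(u)|² = Σ_a e(-u·a) Σ_y e(c·(f(y+a) − f(y)))`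
exhibits `|W_{f_c}|²` as the Fourier transform of the autocorrelation of `f_c`. By Fourier
inversion, `f_c` is bent exactly when this autocorrelation vanishes at every `a ≠ 0`. Dually, the
difference map `y ↦ f(y+a) − f(y)` is a bijection exactly when all its fibres have one point,
i.e. (Fourier inversion of the fibre sizes) when `Σ_y e(c·(f(y+a) − f(y))) = 0` for every
`c ≠ 0`. So both sides of the equivalence say that this double family of sums vanishes. -/

/-- The Walsh–Hadamard transform of `g : F_p^n → F_p` at `u`:
`W_g(u) = Σ_x ε_p^{g(x) − u·x}` with `ε_p = e^{2πi/p}`. -/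
def walsh (p n : ℕ) [Fact p.Prime] (g : (Fin n → ZMod p) → ZMod p)
    (u : Fin n → ZMod p) : ℂ :=
  ∑ x : Fin n → ZMod p,
    Complex.exp (2 * Real.pi * Complex.I / p) ^ (g x - ∑ i, u i * x i).val

open Matrix ComplexConjugate

lemma Fintype.bijective_iff_card_filter_eq_one {α β : Type*} [Fintype α] [DecidableEq β]
    (g : α → β) : Function.Bijective g ↔ ∀ b, #{a | g a = b} = 1 := by
  simp only [Function.bijective_iff_existsUnique, card_eq_one, eq_singleton_iff_unique_mem,
    mem_filter, mem_univ, true_and]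
  rfl

section CharacterSums

variable {R ι : Type*} [CommRing R] [Fintype R] [Fintype ι] [DecidableEq ι]
  {ψ : AddChar R ℂ}

lemma AddChar.IsPrimitive.sum_dotProduct_eq_zero (hψ : ψ.IsPrimitive) {c : ι → R} (hc : c ≠ 0) :
    ∑ x, ψ (c ⬝ᵥ x) = 0 := by
  let χ : AddChar (ι → R) ℂ := ψ.compAddMonoidHom ⟨⟨(c ⬝ᵥ ·), dotProduct_zero c⟩, dotProduct_add c⟩
  refine (AddChar.sum_eq_zero_iff_ne_zero (ψ := χ)).2 ?_
  obtain ⟨j, hj⟩ := Function.ne_iff.1 hc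
  obtain ⟨t, ht⟩ := AddChar.ne_one_iff.1 (hψ hj)
  refine AddChar.ne_zero_iff.2 ⟨Pi.single j t, ?_⟩
  simpa [χ] using ht

variable (ψ)

def charDFT (F : (ι → R) → ℂ) (u : ι → R) : ℂ := ∑ a, ψ (-(u ⬝ᵥ a)) * F a

lemma sum_mul_charDFT (hψ : ψ.IsPrimitive) (F : (ι → R) → ℂ) (b : ι → R) :
    ∑ u, ψ (u ⬝ᵥ b) * charDFT ψ F u = Fintype.card (ι → R) * F b := by
  have hmul (a u : ι → R) : ψ (u ⬝ᵥ b) * ψ (-(u ⬝ᵥ a)) = ψ ((b - a) ⬝ᵥ u) := by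
    rw [← AddChar.map_add_eq_mul, sub_dotProduct, dotProduct_comm b, dotProduct_comm a,
      sub_eq_add_neg]
  simp only [charDFT, mul_sum, ← mul_assoc, hmul]
  rw [sum_comm, sum_eq_single b]
  · simp
  · intro a _ hab
    rw [← sum_mul, hψ.sum_dotProduct_eq_zero (sub_ne_zero.2 (Ne.symm hab)), zero_mul]
  · simp

lemma charDFT_injective (hψ : ψ.IsPrimitive) :
    Function.Injective (charDFT ψ : ((ι → R) → ℂ) → (ι → R) → ℂ) := by
  intro F G h
  funext b
  have hcard : (Fintype.card (ι → R) : ℂ) ≠ 0 := Nat.cast_ne_zero.2 Fintype.card_ne_zero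
  apply mul_left_cancel₀ hcard
  rw [← sum_mul_charDFT ψ hψ, ← sum_mul_charDFT ψ hψ, h]

lemma charDFT_single_zero [DecidableEq R] (z : ℂ) (u : ι → R) :
    charDFT ψ (Pi.single 0 z) u = z := by
  simp [charDFT, Pi.single_apply]

lemma bijective_iff_sum_dotProduct_eq_zero (hψ : ψ.IsPrimitive) (g : (ι → R) → ι → R) :
    Function.Bijective g ↔ ∀ c ≠ 0, ∑ y, ψ (c ⬝ᵥ g y) = 0 := by
  classical
  have hfiber (u : ι → R) :
      charDFT ψ (fun z ↦ (#{y | g y = z} : ℂ)) u = ∑ y, ψ (-(u ⬝ᵥ g y)) := by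
    simp only [charDFT, natCast_card_filter, mul_sum, mul_ite, mul_one, mul_zero]
    rw [sum_comm]
    simp
  have hconst (u : ι → R) : charDFT ψ (fun _ ↦ 1) u = ∑ a, ψ (-(u ⬝ᵥ a)) := by
    simp [charDFT]
  calc Function.Bijective g
      ↔ (fun z ↦ (#{y | g y = z} : ℂ)) = fun _ ↦ 1 := by
        simp only [Fintype.bijective_iff_card_filter_eq_one, funext_iff, Nat.cast_eq_one]
    _ ↔ ∀ u, ∑ y, ψ (-(u ⬝ᵥ g y)) = ∑ a, ψ (-(u ⬝ᵥ a)) := by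
        rw [← (charDFT_injective ψ hψ).eq_iff, funext_iff]
        simp only [hfiber, hconst]
    _ ↔ ∀ c ≠ 0, ∑ y, ψ (c ⬝ᵥ g y) = 0 := by
        simp only [← neg_dotProduct]
        refine ⟨fun h c hc ↦ ?_, fun h u ↦ ?_⟩
        · simpa [hψ.sum_dotProduct_eq_zero hc] using h (-c)
        · rcases eq_or_ne u 0 with rfl | hu
          · simp
          · rw [h _ (neg_ne_zero.2 hu), hψ.sum_dotProduct_eq_zero (neg_ne_zero.2 hu)]

def walshTransform (g : (ι → R) → R) (u : ι → R) : ℂ := ∑ x, ψ (g x - u ⬝ᵥ x)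

def autocorr (g : (ι → R) → R) (a : ι → R) : ℂ := ∑ y, ψ (g (y + a) - g y)

def IsBent (g : (ι → R) → R) : Prop :=
  ∀ u, ‖walshTransform ψ g u‖ ^ 2 = Fintype.card (ι → R)

lemma autocorr_zero (g : (ι → R) → R) : autocorr ψ g 0 = Fintype.card (ι → R) := by
  simp [autocorr]

lemma sq_norm_walshTransform (g : (ι → R) → R) (u : ι → R) :
    ((‖walshTransform ψ g u‖ ^ 2 : ℝ) : ℂ) = charDFT ψ (autocorr ψ g) u := by
  push_cast
  rw [← Complex.mul_conj']
  calc walshTransform ψ g u * conj (walshTransform ψ g u)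
      = ∑ y, ∑ x, ψ (g x - u ⬝ᵥ x) * ψ (-(g y - u ⬝ᵥ y)) := by
        simp only [walshTransform, map_sum, sum_mul_sum, ← AddChar.map_neg_eq_conj]
        exact sum_comm
    _ = ∑ y, ∑ a, ψ (g (y + a) - u ⬝ᵥ (y + a)) * ψ (-(g y - u ⬝ᵥ y)) :=
        sum_congr rfl fun y _ ↦ (Fintype.sum_equiv (Equiv.addLeft y) _ _ fun _ ↦ rfl).symm
    _ = ∑ y, ∑ a, ψ (-(u ⬝ᵥ a)) * ψ (g (y + a) - g y) := by
        refine sum_congr rfl fun y _ ↦ sum_congr rfl fun a _ ↦ ?_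
        rw [← AddChar.map_add_eq_mul, ← AddChar.map_add_eq_mul, dotProduct_add]
        ring_nf
    _ = charDFT ψ (autocorr ψ g) u := by
        rw [sum_comm]
        simp only [charDFT, autocorr, mul_sum]

lemma isBent_iff_autocorr_eq_zero (hψ : ψ.IsPrimitive) (g : (ι → R) → R) :
    IsBent ψ g ↔ ∀ a ≠ 0, autocorr ψ g a = 0 := by
  classical
  have hDFT : IsBent ψ g ↔
      charDFT ψ (autocorr ψ g) = charDFT ψ (Pi.single 0 (Fintype.card (ι → R) : ℂ)) := by
    simp only [IsBent, funext_iff, charDFT_single_zero, ← sq_norm_walshTransform,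
      ← Complex.ofReal_natCast, Complex.ofReal_inj]
  rw [hDFT, (charDFT_injective ψ hψ).eq_iff, funext_iff]
  refine forall_congr' fun a ↦ ?_
  rcases eq_or_ne a 0 with rfl | ha
  · simp [autocorr_zero]
  · simp [ha]

lemma planar_iff_forall_isBent (hψ : ψ.IsPrimitive) (f : (ι → R) → ι → R) :
    (∀ a ≠ 0, Function.Bijective fun x ↦ f (x + a) - f x) ↔
      ∀ c ≠ 0, IsBent ψ fun x ↦ c ⬝ᵥ f x := by
  simp only [bijective_iff_sum_dotProduct_eq_zero ψ hψ, isBent_iff_autocorr_eq_zero ψ hψ,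
    autocorr, ← dotProduct_sub]
  exact forall₂_comm

end CharacterSums

lemma walsh_eq_walshTransform (p n : ℕ) [Fact p.Prime] (g : (Fin n → ZMod p) → ZMod p) :
    walsh p n g = walshTransform ZMod.stdAddChar g := by
  funext u
  refine sum_congr rfl fun x _ ↦ ?_
  rw [ZMod.stdAddChar_apply, ZMod.toCircle_apply, ← Complex.exp_nat_mul, dotProduct]
  ring_nf

theorem planar_iff_components_bent_general (p n : ℕ) [Fact p.Prime]
    (f : (Fin n → ZMod p) → (Fin n → ZMod p)) :
    (∀ a : Fin n → ZMod p, a ≠ 0 → Function.Bijective (fun x => f (x + a) - f x)) ↔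
    (∀ c : Fin n → ZMod p, c ≠ 0 → ∀ u : Fin n → ZMod p,
      ‖walsh p n (fun x => ∑ i, c i * f x i) u‖ ^ 2 = (p : ℝ) ^ n) := by
  have hcard : (Fintype.card (Fin n → ZMod p) : ℝ) = (p : ℝ) ^ n := by simp
  rw [planar_iff_forall_isBent _ (ZMod.isPrimitive_stdAddChar p) f]
  simp only [IsBent, walsh_eq_walshTransform, hcard]
  rfl

/-- A function `f : F_p^n → F_p^n` (p an odd prime, n ≥ 1) is planar iff all its
nonzero component functions `x ↦ c·f(x)` are bent. -/
theorem planar_iff_components_bent (p n : ℕ) [Fact p.Prime] (hp : Odd p) (hn : 1 ≤ n)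
    (f : (Fin n → ZMod p) → (Fin n → ZMod p)) :
    (∀ a : Fin n → ZMod p, a ≠ 0 → Function.Bijective (fun x => f (x + a) - f x)) ↔
    (∀ c : Fin n → ZMod p, c ≠ 0 → ∀ u : Fin n → ZMod p,
      ‖walsh p n (fun x => ∑ i, c i * f x i) u‖ ^ 2 = (p : ℝ) ^ n) :=
  planar_iff_components_bent_general p n f
end
end

section
/- For every u, c ∈ F_2^n, the map χ_{u,c}(x,y) = (−1)^{u·x + c·y} · i^{wt(c⊙x)} is multiplicative for the group operation (x₁,y₁) * (x₂,y₂) = (x₁+x₂, y₁+y₂+x₁⊙x₂) on F_2^n × F_2^n; that is, χ_{u,c}((x₁,y₁)*(x₂,y₂)) = χ_{u,c}(x₁,y₁) · χ_{u,c}(x₂,y₂) for all x₁,x₂,y₁,y₂ ∈ F_2^n. -/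
open Finset

noncomputable section

/-- Dot product on `F_2^n`. -/
def dotp {n : ℕ} (x y : Fin n → ZMod 2) : ZMod 2 := ∑ i, x i * y i

/-- Coordinatewise product on `F_2^n`. -/
def odot {n : ℕ} (x y : Fin n → ZMod 2) : Fin n → ZMod 2 := fun i => x i * y i

/-- Hamming weight of `z ∈ F_2^n`. -/
def wt {n : ℕ} (z : Fin n → ZMod 2) : ℕ := ∑ i, (z i).val

/-- The character `χ_{u,c}(x,y) = (−1)^{u·x + c·y} · i^{wt(c⊙x)}`. -/
def chi {n : ℕ} (u c : Fin n → ZMod 2) (x y : Fin n → ZMod 2) : ℂ :=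
  (-1 : ℂ) ^ (dotp u x + dotp c y).val * Complex.I ^ wt (odot c x)

/-!
The factor `(-1)^{u·x + c·y}` is additive in `(x, y)` by bilinearity of the dot product, so
everything rests on the extra term `c·(x₁⊙x₂)` of the group law. Since
`wt(a + b) = wt a + wt b - 2 wt(a⊙b)` and `(-1)^{c·z} = i^{2 wt(c⊙z)}`, that term supplies exactly
the correction that makes `x ↦ i^{wt(c⊙x)}` multiplicative.
-/

section NegOnePow

variable {R : Type*} [Ring R]

theorem neg_one_pow_val_add (a b : ZMod 2) :
    (-1 : R) ^ (a + b).val = (-1) ^ a.val * (-1) ^ b.val := by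
  rw [ZMod.val_add, ← neg_one_pow_eq_pow_mod_two, pow_add]

theorem neg_one_pow_val_natCast (k : ℕ) : (-1 : R) ^ (k : ZMod 2).val = (-1) ^ k := by
  rw [ZMod.val_natCast, ← neg_one_pow_eq_pow_mod_two]

end NegOnePow

theorem ZMod.val_add_add_two_mul_val_mul (a b : ZMod 2) :
    (a + b).val + 2 * (a * b).val = a.val + b.val := by
  revert a b
  decide

section BinaryVectors

variable {n : ℕ}

theorem dotp_add_right (c x y : Fin n → ZMod 2) : dotp c (x + y) = dotp c x + dotp c y := by
  simp only [dotp, Pi.add_apply, mul_add, sum_add_distrib]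

theorem odot_add_right (c x y : Fin n → ZMod 2) : odot c (x + y) = odot c x + odot c y := by
  ext i
  exact mul_add _ _ _

theorem odot_odot_odot_self (c x y : Fin n → ZMod 2) :
    odot (odot c x) (odot c y) = odot c (odot x y) := by
  ext i
  simp only [odot]
  generalize c i = a, x i = b, y i = d
  revert a b d
  decide

theorem wt_add_add_two_mul_wt_odot (x y : Fin n → ZMod 2) :
    wt (x + y) + 2 * wt (odot x y) = wt x + wt y := by
  simp only [wt, odot, Pi.add_apply, mul_sum, ← sum_add_distrib,
    ZMod.val_add_add_two_mul_val_mul]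

theorem natCast_wt (x : Fin n → ZMod 2) : (wt x : ZMod 2) = ∑ i, x i := by
  simp only [wt, Nat.cast_sum, ZMod.natCast_zmod_val]

theorem neg_one_pow_dotp_val (c x : Fin n → ZMod 2) :
    (-1 : ℂ) ^ (dotp c x).val = (-1) ^ wt (odot c x) := by
  have hdotp : dotp c x = (wt (odot c x) : ZMod 2) := (natCast_wt _).symm
  rw [hdotp, neg_one_pow_val_natCast]

theorem neg_one_pow_dotp_odot_mul_I_pow_wt (c x₁ x₂ : Fin n → ZMod 2) :
    (-1 : ℂ) ^ (dotp c (odot x₁ x₂)).val * Complex.I ^ wt (odot c (x₁ + x₂))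
      = Complex.I ^ wt (odot c x₁) * Complex.I ^ wt (odot c x₂) := by
  rw [neg_one_pow_dotp_val, ← Complex.I_sq, ← pow_mul, ← pow_add, ← pow_add, odot_add_right,
    ← odot_odot_odot_self, add_comm, wt_add_add_two_mul_wt_odot]

end BinaryVectors

/-- `χ_{u,c}` is multiplicative for the group operation
`(x₁,y₁) * (x₂,y₂) = (x₁+x₂, y₁+y₂+x₁⊙x₂)` on `F_2^n × F_2^n`. -/
theorem chi_multiplicative {n : ℕ} (u c : Fin n → ZMod 2)
    (x₁ x₂ y₁ y₂ : Fin n → ZMod 2) :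
    chi u c (x₁ + x₂) (y₁ + y₂ + odot x₁ x₂) = chi u c x₁ y₁ * chi u c x₂ y₂ := by
  have hexp : dotp u (x₁ + x₂) + dotp c (y₁ + y₂ + odot x₁ x₂)
      = (dotp u x₁ + dotp c y₁) + (dotp u x₂ + dotp c y₂) + dotp c (odot x₁ x₂) := by
    simp only [dotp_add_right]
    ring
  rw [chi, chi, chi, hexp, neg_one_pow_val_add, neg_one_pow_val_add, mul_assoc,
    neg_one_pow_dotp_odot_mul_I_pow_wt]
  ring
end
end

section
/- Let F be the finite field with 2^n elements. For every c, x ∈ F, the element σ(c,x) = Σ_{0≤i<j≤n−1} (cx)^{2^i} (cx)^{2^j} ∈ F satisfies σ(c,x)² = σ(c,x); in particular σ(c,x) ∈ {0,1} ⊆ F. -/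
/-! `σ(c,x)` is the second elementary symmetric function of the conjugates `y, y², …, y^{2^{n-1}}`
of `y = cx`. Squaring is the Frobenius, which permutes these conjugates cyclically because
`y^{2^n} = y`, so it fixes `σ(c,x)`. -/

open Finset

noncomputable section

noncomputable instance (n : ℕ) : Fintype (GaloisField 2 n) := Fintype.ofFinite _

/-- The absolute trace `Tr : F → F_2` for `F = GaloisField 2 n`. -/
def Tr (n : ℕ) (z : GaloisField 2 n) : ZMod 2 :=
  Algebra.trace (ZMod 2) (GaloisField 2 n) z

/-- `σ(c,x) = Σ_{0 ≤ i < j ≤ n−1} (cx)^{2^i} (cx)^{2^j} ∈ F`. -/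
def sigma (n : ℕ) (c x : GaloisField 2 n) : GaloisField 2 n :=
  ∑ p ∈ (Finset.range n ×ˢ Finset.range n).filter (fun p => p.1 < p.2),
    (c * x) ^ (2 ^ p.1) * (c * x) ^ (2 ^ p.2)

/-- Lift of an element of `{0,1} ⊆ F` to the integer `0` or `1`. -/
def lift01 {n : ℕ} (a : GaloisField 2 n) : ℕ :=
  letI := Classical.decEq (GaloisField 2 n)
  if a = 1 then 1 else 0

theorem Finset.sum_filter_lt_range_product {M : Type*} [AddCommMonoid M] (n : ℕ)
    (f : ℕ × ℕ → M) :
    ∑ p ∈ (range n ×ˢ range n).filter (fun p => p.1 < p.2), f p =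
      ∑ j ∈ range n, ∑ i ∈ range j, f (i, j) :=
  sum_finset_product_right _ _ _ fun p => by
    simp only [mem_filter, mem_product, mem_range]
    omega

/-- Shifting both indices of `∑_{i<j<n} a i * a j` by one removes the terms `a 0 * a j` and adds
the terms `a i * a n`, so the sum is unchanged when `a n = a 0`. -/
theorem Finset.sum_range_pairs_succ_eq {R : Type*} [CommSemiring R] {a : ℕ → R} {n : ℕ}
    (h : a n = a 0) :
    ∑ j ∈ range n, ∑ i ∈ range j, a (i + 1) * a (j + 1) =
      ∑ j ∈ range n, ∑ i ∈ range j, a i * a j := by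
  cases n with
  | zero => rfl
  | succ m =>
    rw [sum_range_succ, sum_range_succ' _ m, h]
    simp only [sum_range_succ' (fun i => a i * a _), sum_range_zero, add_zero, sum_add_distrib]
    simp only [mul_comm (a 0)]

theorem sum_range_pairs_pow_expChar_pow_eq_self {R : Type*} [CommSemiring R] (p : ℕ)
    [ExpChar R p] {n : ℕ} {y : R} (hy : y ^ p ^ n = y) :
    (∑ j ∈ range n, ∑ i ∈ range j, y ^ p ^ i * y ^ p ^ j) ^ p =
      ∑ j ∈ range n, ∑ i ∈ range j, y ^ p ^ i * y ^ p ^ j := by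
  simp only [sum_pow_char, mul_pow, ← pow_mul, ← pow_succ]
  exact sum_range_pairs_succ_eq (a := fun i => y ^ p ^ i) (by simpa using hy)

theorem GaloisField.pow_char_pow_eq_self {p : ℕ} [Fact p.Prime] {n : ℕ} (y : GaloisField p n) :
    y ^ p ^ n = y := by
  rcases eq_or_ne n 0 with rfl | hn
  · exact pow_one y
  · have : Fintype (GaloisField p n) := Fintype.ofFinite _
    have hy := FiniteField.pow_card y
    rwa [Fintype.card_eq_nat_card, GaloisField.card p n hn] at hy

/-- `σ(c,x)² = σ(c,x)`; in particular `σ(c,x) ∈ {0,1} ⊆ F`. -/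
theorem sigma_sq_eq_sigma (n : ℕ) (c x : GaloisField 2 n) :
    sigma n c x ^ 2 = sigma n c x ∧ (sigma n c x = 0 ∨ sigma n c x = 1) := by
  have hsq : sigma n c x ^ 2 = sigma n c x := by
    rw [sigma, sum_filter_lt_range_product]
    exact sum_range_pairs_pow_expChar_pow_eq_self 2 (GaloisField.pow_char_pow_eq_self (c * x))
  exact ⟨hsq, IsIdempotentElem.iff_eq_zero_or_one.mp ((sq _).symm.trans hsq)⟩
end
end

section
/- Let n ≥ 1 and let g : F_2^n → F_2 be affine, g(x) = a·x + b with a ∈ F_2^n and b ∈ F_2. If c ∈ F_2^n is not the all-ones vector 1 = (1,…,1), then g is not c-bent₄; that is, there exists u ∈ F_2^n with |U_g^c(u)| ≠ 2^{n/2}. -/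
/-!
Pick a coordinate `j` with `c j = 0` and take `u = a + e_j`. Then the phase of the summand at
`x` is `(-1)^(b + x_j) · i^{wt(c ⊙ x)}`, and translating `x` by `e_j` leaves `c ⊙ x` unchanged
while flipping the sign. Hence `U_g^c(u) = 0`, which is not `2^{n/2}`.
-/

open Finset

noncomputable section

/-- The unitary transform `U_g^c(u) = Σ_x (−1)^{g(x)+u·x} · i^{wt(c⊙x)}`. -/
def U {n : ℕ} (g : (Fin n → ZMod 2) → ZMod 2) (c u : Fin n → ZMod 2) : ℂ :=
  ∑ x : Fin n → ZMod 2, (-1 : ℂ) ^ (g x + dotp u x).val * Complex.I ^ wt (odot c x)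

lemma neg_one_pow_val_add_s18 {R : Type*} [Ring R] (v w : ZMod 2) :
    (-1 : R) ^ (v + w).val = (-1 : R) ^ v.val * (-1 : R) ^ w.val := by
  rw [ZMod.val_add, ← neg_one_pow_eq_pow_mod_two, pow_add]

section Vectors

variable {n : ℕ}

lemma exists_eq_zero_of_ne_allOnes {c : Fin n → ZMod 2} (hc : c ≠ fun _ => 1) :
    ∃ j, c j = 0 := by
  by_contra! h
  exact hc (funext fun i => (by decide : ∀ y : ZMod 2, y ≠ 0 → y = 1) _ (h i))

lemma dotp_add_left (x y z : Fin n → ZMod 2) : dotp (x + y) z = dotp x z + dotp y z := by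
  simp [dotp, add_mul, sum_add_distrib]

lemma dotp_single_one_left (j : Fin n) (x : Fin n → ZMod 2) :
    dotp (Pi.single j 1) x = x j := by
  simp [dotp, Pi.single_apply]

lemma odot_add_single_of_eq_zero {c : Fin n → ZMod 2} {j : Fin n} (hj : c j = 0)
    (x : Fin n → ZMod 2) (t : ZMod 2) : odot c (x + Pi.single j t) = odot c x := by
  funext i
  rcases eq_or_ne i j with rfl | hij
  · simp [odot, hj]
  · simp [odot, Pi.single_eq_of_ne hij]

end Vectors

lemma U_affine_add {n : ℕ} (a v c : Fin n → ZMod 2) (b : ZMod 2) :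
    U (fun x => dotp a x + b) c (a + v) =
      ∑ x : Fin n → ZMod 2, (-1 : ℂ) ^ (b + dotp v x).val * Complex.I ^ wt (odot c x) := by
  refine sum_congr rfl fun x _ => ?_
  congr 3
  rw [dotp_add_left]
  linear_combination CharTwo.add_self_eq_zero (dotp a x)

lemma sum_neg_one_pow_coord_mul_eq_zero {n : ℕ} {c : Fin n → ZMod 2} {j : Fin n}
    (hj : c j = 0) (b : ZMod 2) :
    ∑ x : Fin n → ZMod 2, (-1 : ℂ) ^ (b + x j).val * Complex.I ^ wt (odot c x) = 0 := by
  set f : (Fin n → ZMod 2) → ℂ := fun x => (-1 : ℂ) ^ (b + x j).val * Complex.I ^ wt (odot c x)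
  have hflip : ∀ x, f (x + Pi.single j 1) = -f x := fun x => by
    simp only [f, odot_add_single_of_eq_zero hj, Pi.add_apply, Pi.single_eq_same, ← add_assoc,
      neg_one_pow_val_add_s18 _ 1, ZMod.val_one, pow_one, mul_neg_one, neg_mul]
  rw [← CharZero.eq_neg_self_iff]
  calc ∑ x, f x = ∑ x, f (x + Pi.single j 1) :=
        (Equiv.sum_comp (Equiv.addRight (Pi.single j 1)) f).symm
    _ = -∑ x, f x := by simp only [hflip, sum_neg_distrib]

theorem affine_not_cBent4_of_ne_allOnes_general {n : ℕ}
    (a : Fin n → ZMod 2) (b : ZMod 2) (c : Fin n → ZMod 2)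
    (hc : c ≠ fun _ => 1) :
    ∃ u : Fin n → ZMod 2,
      ‖U (fun x => dotp a x + b) c u‖ ≠ (2 : ℝ) ^ ((n : ℝ) / 2) := by
  obtain ⟨j, hj⟩ := exists_eq_zero_of_ne_allOnes hc
  refine ⟨a + Pi.single j 1, ?_⟩
  simp only [U_affine_add, dotp_single_one_left, sum_neg_one_pow_coord_mul_eq_zero hj, norm_zero]
  exact (Real.rpow_pos_of_pos two_pos _).ne

/-- A multivariate affine function `g(x) = a·x + b` is not `c`-bent₄ for any `c`
different from the all-ones vector. -/
theorem affine_not_cBent4_of_ne_allOnes {n : ℕ} (hn : 1 ≤ n)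
    (a : Fin n → ZMod 2) (b : ZMod 2) (c : Fin n → ZMod 2)
    (hc : c ≠ fun _ => 1) :
    ∃ u : Fin n → ZMod 2,
      ‖U (fun x => dotp a x + b) c u‖ ≠ (2 : ℝ) ^ ((n : ℝ) / 2) :=
  affine_not_cBent4_of_ne_allOnes_general a b c hc
end
end
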